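/- (Logical qubit count and infinite single-shot distance of the double homological product code, Theorem 4 parameter part.) Let δ ∈ M_{(n−k) × n}(F2) have full row rank n − k (so nullity(δ) = k and nullity(δᵀ) = 0). Define δ̃_{−1} := [1_n ⊗ δᵀ ; δ ⊗ 1_{n−k}], δ̃_0 := [δ ⊗ 1_n , 1_{n−k} ⊗ δᵀ], set ñ_{−1} := n(n−k), ñ_0 := n² + (n−k)², ñ_1 := (n−k)n, and define δ̆_{−1}, δ̆_0 as the block matrices of the double homological product: δ̆_{−1} := [[1_{ñ_{−1}} ⊗ δ̃_{−1}ᵀ , 0], [δ̃_{−1} ⊗ 1_{ñ_0} , 1_{ñ_0} ⊗ δ̃_0ᵀ], [0 , δ̃_0 ⊗ 1_{ñ_1}]], δ̆_0 := [[δ̃_{−1} ⊗ 1_{ñ_{−1}} , 1_{ñ_0} ⊗ δ̃_{−1}ᵀ , 0], [0 , δ̃_0 ⊗ 1_{ñ_0} , 1_{ñ_1} ⊗ δ̃_0ᵀ]], and δ̆_1 := [δ̃_0 ⊗ 1_{ñ_{−1}} , 1_{ñ_1} ⊗ δ̃_{−1}ᵀ]. Then the number of physical qubits is ñ_{−1}²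 + ñ_0² + ñ_1² = n⁴ + 4n²(n−k)² + (n−k)⁴; the number of logical qubits is nullity(δ̆_0) − rank(δ̆_{−1}) = k⁴; and nullity(δ̆_1) = rank(δ̆_0), i.e. every s with δ̆_1·s = 0 lies in the image of δ̆_0, so the single-shot distance d_ss is infinite. -/

import Mathlib

open Matrix
open scoped Kronecker

abbrev F2 := ZMod 2

/-- Hamming weight of a vector over `F2`. -/
def vwt {ι : Type*} [Fintype ι] (v : ι → F2) : ℕ :=
  (Finset.univ.filter fun i => v i ≠ 0).card

/-- Hamming weight of a matrix over `F2` (number of nonzero entries). -/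
def mwt {ι κ : Type*} [Fintype ι] [Fintype κ] (M : Matrix ι κ F2) : ℕ :=
  (Finset.univ.filter fun p : ι × κ => M p.1 p.2 ≠ 0).card

/-- Nullity of a matrix over `F2`: dimension of the kernel of the induced linear map. -/
noncomputable def nullity {ι κ : Type*} [Fintype ι] [Fintype κ] (M : Matrix ι κ F2) : ℕ :=
  Module.finrank F2 (LinearMap.ker M.mulVecLin)

/-- Index set of the level `−1` space of the hypergraph product. -/
abbrev Cm1 (n k : ℕ) := Fin n × Fin (n - k)
/-- Index set of the level `0` space of the hypergraph product. -/
abbrev C0 (n k : ℕ) := (Fin n × Fin n) ⊕ (Fin (n - k) × Fin (n - k))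
/-- Index set of the level `1` space of the hypergraph product. -/
abbrev C1 (n k : ℕ) := Fin (n - k) × Fin n

/-!
With `X, Y, Z` the three levels of the hypergraph product, `A = δ̃₋₁ : X → Y` and
`B = δ̃₀ : Y → Z` satisfy `B * A = 0`, and a right inverse `ε` of `δ` (full row rank) yields a
left inverse `G` of `A` and a right inverse `H` of `B`. The double product is the complex
`X×Z → X×Y ⊕ Y×Z → X×X ⊕ Y×Y ⊕ Z×Z → Y×X ⊕ Z×Y → Z×X`; reading a vector on `U × V` as a
`U × V` matrix, its differentials become sums of one-sided products with `A` and `B`, and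
`G`, `H` give explicit preimages: the complex is exact everywhere except at the qubits. Hence
the number of logical qubits is the Euler characteristic
`(|X| - |Y| + |Z|)² = (k²)²`.
-/

theorem add_self_eq_zero_of_charTwo (R : Type*) {M : Type*} [Ring R] [CharP R 2]
    [AddCommGroup M] [Module R M] (x : M) : x + x = 0 := by
  rw [← two_smul R, CharTwo.two_eq_zero, zero_smul]

theorem eq_of_add_eq_zero_of_charTwo (R : Type*) {M : Type*} [Ring R] [CharP R 2]
    [AddCommGroup M] [Module R M] {x y : M} (h : x + y = 0) : x = y := by
  rw [← add_left_inj y, h, add_self_eq_zero_of_charTwo R]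

namespace Matrix

variable {R : Type*} {l m n p β : Type*}

-- `vec Sᵀ` is the row-major flattening `(i, j) ↦ S i j` of `S`.
theorem exists_vec_transpose_eq (v : m × n → R) : ∃ S : Matrix m n R, vec Sᵀ = v :=
  ⟨of (Function.curry v), rfl⟩

theorem exists_sumElim_vec_transpose_eq (v : (m × n) ⊕ β → R) :
    ∃ (S : Matrix m n R) (w : β → R), Sum.elim (vec Sᵀ) w = v :=
  ⟨of (Function.curry (v ∘ Sum.inl)), v ∘ Sum.inr, Sum.elim_comp_inl_inr v⟩

theorem kronecker_mulVec_vec_transpose [CommSemiring R] [Fintype m] [Fintype n]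
    (P : Matrix l m R) (Q : Matrix p n R) (S : Matrix m n R) :
    (P ⊗ₖ Q) *ᵥ vec Sᵀ = vec (P * S * Qᵀ)ᵀ := by
  rw [kronecker_mulVec_vec, transpose_mul, transpose_mul, transpose_transpose, Matrix.mul_assoc]

theorem rank_eq_card_height_of_mul_eq_one [Fintype m] [Fintype n] [DecidableEq m] [CommRing R]
    [StrongRankCondition R] {M : Matrix m n R} {K : Matrix n m R} (h : M * K = 1) :
    M.rank = Fintype.card m :=
  le_antisymm M.rank_le_card_height (by simpa [h] using rank_mul_le_left M K)

theorem rank_eq_card_width_of_mul_eq_one [Fintype m] [Fintype n] [DecidableEq n] [CommRing R]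
    [StrongRankCondition R] {M : Matrix m n R} {L : Matrix n m R} (h : L * M = 1) :
    M.rank = Fintype.card n :=
  le_antisymm M.rank_le_card_width (by simpa [h] using rank_mul_le_right L M)

theorem exists_mul_eq_one_of_rank_eq_card_height {K : Type*} [Field K] [Fintype m] [Fintype n]
    [DecidableEq m] {M : Matrix m n K} (h : M.rank = Fintype.card m) :
    ∃ E : Matrix n m K, M * E = 1 := by
  refine mulVec_surjective_iff_exists_right_inverse.mp fun y => ?_
  have : LinearMap.range M.mulVecLin = ⊤ := Submodule.eq_top_of_finrank_eq <| by
    rw [Module.finrank_fintype_fun_eq_card, ← h, rank]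
  exact LinearMap.range_eq_top.mp this y

theorem rank_add_nullity [Fintype m] [Fintype n] (M : Matrix m n F2) :
    M.rank + nullity M = Fintype.card n := by
  rw [rank, nullity, LinearMap.finrank_range_add_finrank_ker, Module.finrank_fintype_fun_eq_card]

theorem nullity_eq_rank_of_ker_eq_range [Fintype l] [Fintype m] [Fintype n]
    {N : Matrix l m F2} {M : Matrix m n F2}
    (h : LinearMap.ker N.mulVecLin = LinearMap.range M.mulVecLin) : nullity N = M.rank := by
  rw [nullity, h, rank]

end Matrix

namespace HypergraphProduct

variable {R : Type*} [CommRing R] {m n : Type*} [DecidableEq m] [DecidableEq n]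

def dNeg1 (δ : Matrix m n R) : Matrix ((n × n) ⊕ (m × m)) (n × m) R :=
  fromRows (1 ⊗ₖ δᵀ) (δ ⊗ₖ 1)

def d0 (δ : Matrix m n R) : Matrix (m × n) ((n × n) ⊕ (m × m)) R :=
  fromCols (δ ⊗ₖ 1) (1 ⊗ₖ δᵀ)

variable [Fintype m] [Fintype n] (δ : Matrix m n R)

theorem d0_mul_dNeg1 [CharP R 2] : d0 δ * dNeg1 δ = 0 := by
  rw [d0, dNeg1, fromCols_mul_fromRows, ← mul_kronecker_mul, ← mul_kronecker_mul,
    Matrix.mul_one, Matrix.one_mul, Matrix.mul_one, Matrix.one_mul,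
    add_self_eq_zero_of_charTwo R]

theorem exists_mul_dNeg1_eq_one {ε : Matrix n m R} (hε : δ * ε = 1) :
    ∃ G : Matrix (n × m) ((n × n) ⊕ (m × m)) R, G * dNeg1 δ = 1 :=
  ⟨fromCols ((1 : Matrix n n R) ⊗ₖ εᵀ) 0, by
    rw [dNeg1, fromCols_mul_fromRows, Matrix.zero_mul, add_zero, ← mul_kronecker_mul,
      Matrix.one_mul, ← transpose_mul, hε, transpose_one, one_kronecker_one]⟩

theorem exists_d0_mul_eq_one {ε : Matrix n m R} (hε : δ * ε = 1) :
    ∃ H : Matrix ((n × n) ⊕ (m × m)) (m × n) R, d0 δ * H = 1 :=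
  ⟨fromRows (ε ⊗ₖ (1 : Matrix n n R)) 0, by
    rw [d0, fromCols_mul_fromRows, Matrix.mul_zero, add_zero, ← mul_kronecker_mul,
      Matrix.one_mul, hε, one_kronecker_one]⟩

end HypergraphProduct

namespace DoubleProduct

variable {R : Type*} [CommRing R] {X Y Z : Type*} [DecidableEq X] [DecidableEq Z]

def dNeg2 (A : Matrix Y X R) (B : Matrix Z Y R) : Matrix ((X × Y) ⊕ (Y × Z)) (X × Z) R :=
  fromRows (1 ⊗ₖ Bᵀ) (A ⊗ₖ 1)

def dNeg1 [DecidableEq Y] (A : Matrix Y X R) (B : Matrix Z Y R) :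
    Matrix ((X × X) ⊕ ((Y × Y) ⊕ (Z × Z))) ((X × Y) ⊕ (Y × Z)) R :=
  fromBlocks (1 ⊗ₖ Aᵀ) 0 (fromRows (A ⊗ₖ 1) 0) (fromRows (1 ⊗ₖ Bᵀ) (B ⊗ₖ 1))

def d0 [DecidableEq Y] (A : Matrix Y X R) (B : Matrix Z Y R) :
    Matrix ((Y × X) ⊕ (Z × Y)) ((X × X) ⊕ ((Y × Y) ⊕ (Z × Z))) R :=
  fromBlocks (A ⊗ₖ 1) (fromCols (1 ⊗ₖ Aᵀ) 0) 0 (fromCols (B ⊗ₖ 1) (1 ⊗ₖ Bᵀ))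

def d1 (A : Matrix Y X R) (B : Matrix Z Y R) : Matrix (Z × X) ((Y × X) ⊕ (Z × Y)) R :=
  fromCols (B ⊗ₖ 1) (1 ⊗ₖ Aᵀ)

variable [Fintype X] [Fintype Z] {A : Matrix Y X R} {B : Matrix Z Y R}

theorem dNeg2_mulVec (T : Matrix X Z R) :
    dNeg2 A B *ᵥ vec Tᵀ = Sum.elim (vec (T * B)ᵀ) (vec (A * T)ᵀ) := by
  simp [dNeg2, fromRows_mulVec, kronecker_mulVec_vec_transpose]

variable [Fintype Y]

theorem rank_dNeg2 [StrongRankCondition R] {G : Matrix X Y R} (hGA : G * A = 1) :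
    (dNeg2 A B).rank = Fintype.card (X × Z) :=
  rank_eq_card_width_of_mul_eq_one (L := fromCols 0 (G ⊗ₖ 1)) <| by
    rw [dNeg2, fromCols_mul_fromRows, Matrix.zero_mul, zero_add, ← mul_kronecker_mul, hGA,
      Matrix.one_mul, one_kronecker_one]

theorem d1_mulVec (S₁ : Matrix Y X R) (S₂ : Matrix Z Y R) :
    d1 A B *ᵥ Sum.elim (vec S₁ᵀ) (vec S₂ᵀ) = vec (B * S₁ + S₂ * A)ᵀ := by
  simp [d1, kronecker_mulVec_vec_transpose, vec_add]

theorem rank_d1 [StrongRankCondition R] {H : Matrix Y Z R} (hBH : B * H = 1) :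
    (d1 A B).rank = Fintype.card (Z × X) :=
  rank_eq_card_height_of_mul_eq_one (K := fromRows (H ⊗ₖ 1) 0) <| by
    rw [d1, fromCols_mul_fromRows, Matrix.mul_zero, add_zero, ← mul_kronecker_mul, hBH,
      Matrix.one_mul, one_kronecker_one]

variable [DecidableEq Y]

theorem dNeg1_mulVec (U₁ : Matrix X Y R) (U₂ : Matrix Y Z R) :
    dNeg1 A B *ᵥ Sum.elim (vec U₁ᵀ) (vec U₂ᵀ) =
      Sum.elim (vec (U₁ * A)ᵀ) (Sum.elim (vec (A * U₁ + U₂ * B)ᵀ) (vec (B * U₂)ᵀ)) := by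
  simp [dNeg1, fromBlocks_mulVec, fromRows_mulVec, kronecker_mulVec_vec_transpose, vec_add,
    ← Sum.elim_add_add]

theorem d0_mulVec (Q₀ : Matrix X X R) (Q₁ : Matrix Y Y R) (Q₂ : Matrix Z Z R) :
    d0 A B *ᵥ Sum.elim (vec Q₀ᵀ) (Sum.elim (vec Q₁ᵀ) (vec Q₂ᵀ)) =
      Sum.elim (vec (A * Q₀ + Q₁ * A)ᵀ) (vec (B * Q₁ + Q₂ * B)ᵀ) := by
  simp [d0, fromBlocks_mulVec, kronecker_mulVec_vec_transpose, vec_add]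

variable [CharP R 2] {G : Matrix X Y R} {H : Matrix Y Z R}

theorem ker_d1_eq_range_d0 (hBA : B * A = 0) (hGA : G * A = 1) (hBH : B * H = 1) :
    LinearMap.ker (d1 A B).mulVecLin = LinearMap.range (d0 A B).mulVecLin := by
  refine le_antisymm (fun s hs => ?_) ?_
  · obtain ⟨S₁, s₂, rfl⟩ := exists_sumElim_vec_transpose_eq s
    obtain ⟨S₂, rfl⟩ := exists_vec_transpose_eq s₂
    rw [LinearMap.mem_ker, mulVecLin_apply, d1_mulVec, vec_eq_zero_iff, transpose_eq_zero] at hs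
    set Q₁ := S₁ * G + H * B * S₁ * G + H * S₂
    have hQ₁A : Q₁ * A = S₁ := by
      simp only [Q₁, Matrix.add_mul, Matrix.mul_assoc, hGA, Matrix.mul_one]
      rw [add_assoc, ← Matrix.mul_add, hs, Matrix.mul_zero, add_zero]
    have hBQ₁ : B * Q₁ = S₂ := by
      simp only [Q₁, Matrix.mul_add, ← Matrix.mul_assoc, hBH, Matrix.one_mul]
      rw [add_self_eq_zero_of_charTwo R, zero_add]
    refine ⟨Sum.elim (vec (0 : Matrix X X R)ᵀ) (Sum.elim (vec Q₁ᵀ) (vec (0 : Matrix Z Z R)ᵀ)),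
      ?_⟩
    rw [mulVecLin_apply, d0_mulVec, Matrix.mul_zero, Matrix.zero_mul, zero_add, add_zero, hQ₁A,
      hBQ₁]
  · rintro _ ⟨r, rfl⟩
    obtain ⟨Q₀, q, rfl⟩ := exists_sumElim_vec_transpose_eq r
    obtain ⟨Q₁, q₂, rfl⟩ := exists_sumElim_vec_transpose_eq q
    obtain ⟨Q₂, rfl⟩ := exists_vec_transpose_eq q₂
    rw [LinearMap.mem_ker, mulVecLin_apply, mulVecLin_apply, d0_mulVec, d1_mulVec,
      vec_eq_zero_iff, transpose_eq_zero]
    calc B * (A * Q₀ + Q₁ * A) + (B * Q₁ + Q₂ * B) * A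
        = B * A * Q₀ + (B * Q₁ * A + B * Q₁ * A) + Q₂ * (B * A) := by
          simp only [Matrix.mul_add, Matrix.add_mul, Matrix.mul_assoc]; abel
      _ = 0 := by
          rw [hBA, add_self_eq_zero_of_charTwo R, Matrix.zero_mul, Matrix.mul_zero, add_zero,
            add_zero]

theorem ker_dNeg1_eq_range_dNeg2 (hBA : B * A = 0) (hGA : G * A = 1) (hBH : B * H = 1) :
    LinearMap.ker (dNeg1 A B).mulVecLin = LinearMap.range (dNeg2 A B).mulVecLin := by
  refine le_antisymm (fun u hu => ?_) ?_
  · obtain ⟨U₁, u₂, rfl⟩ := exists_sumElim_vec_transpose_eq u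
    obtain ⟨U₂, rfl⟩ := exists_vec_transpose_eq u₂
    rw [LinearMap.mem_ker, mulVecLin_apply, dNeg1_mulVec] at hu
    simp only [← Sum.elim_zero_zero, Sum.elim_eq_iff, vec_eq_zero_iff, transpose_eq_zero] at hu
    have hAU₁ : A * U₁ = U₂ * B := eq_of_add_eq_zero_of_charTwo R hu.2.1
    have hU₁ : U₁ = G * U₂ * B := by
      rw [Matrix.mul_assoc, ← hAU₁, ← Matrix.mul_assoc, hGA, Matrix.one_mul]
    refine ⟨vec (U₁ * H)ᵀ, ?_⟩
    rw [mulVecLin_apply, dNeg2_mulVec, ← Matrix.mul_assoc, hAU₁, Matrix.mul_assoc U₂, hBH,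
      Matrix.mul_one]
    congr 3
    calc U₁ * H * B = G * U₂ * (B * H) * B := by rw [hU₁]; simp only [Matrix.mul_assoc]
      _ = U₁ := by rw [hBH, Matrix.mul_one, hU₁]
  · rintro _ ⟨t, rfl⟩
    obtain ⟨T, rfl⟩ := exists_vec_transpose_eq t
    have hTBA : T * B * A = 0 := by rw [Matrix.mul_assoc, hBA, Matrix.mul_zero]
    have hBAT : B * (A * T) = 0 := by rw [← Matrix.mul_assoc, hBA, Matrix.zero_mul]
    rw [LinearMap.mem_ker, mulVecLin_apply, mulVecLin_apply, dNeg2_mulVec, dNeg1_mulVec, hTBA,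
      hBAT, ← Matrix.mul_assoc, add_self_eq_zero_of_charTwo R]
    simp

end DoubleProduct

theorem DoubleProduct.nullity_d0_sub_rank_dNeg1 {X Y Z : Type*} [Fintype X] [Fintype Y]
    [Fintype Z] [DecidableEq X] [DecidableEq Y] [DecidableEq Z] {A : Matrix Y X F2}
    {B : Matrix Z Y F2} {G : Matrix X Y F2} {H : Matrix Y Z F2}
    (hBA : B * A = 0) (hGA : G * A = 1) (hBH : B * H = 1) :
    (nullity (d0 A B) : ℤ) - (dNeg1 A B).rank =
      ((Fintype.card X : ℤ) - Fintype.card Y + Fintype.card Z) ^ 2 := by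
  have hd0 := rank_add_nullity (d0 A B)
  have hd1 := rank_add_nullity (d1 A B)
  have hdNeg1 := rank_add_nullity (dNeg1 A B)
  rw [rank_d1 hBH, nullity_eq_rank_of_ker_eq_range (ker_d1_eq_range_d0 hBA hGA hBH)] at hd1
  rw [nullity_eq_rank_of_ker_eq_range (ker_dNeg1_eq_range_dNeg2 hBA hGA hBH),
    rank_dNeg2 hGA] at hdNeg1
  simp only [Fintype.card_sum, Fintype.card_prod] at hd0 hd1 hdNeg1
  zify at hd0 hd1 hdNeg1
  linear_combination hd0 - hd1 - hdNeg1

/-- Theorem 4, parameter part: the double homological product of a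
full-row-rank classical parity check matrix has `n⁴ + 4n²(n−k)² + (n−k)⁴` physical qubits,
`k⁴` logical qubits, and infinite single-shot distance. -/
theorem double_product_parameters
    (n k : ℕ) (hk : k ≤ n)
    (δ : Matrix (Fin (n - k)) (Fin n) F2)
    (hrank : δ.rank = n - k)
    (tdm1 : Matrix (C0 n k) (Cm1 n k) F2)
    (htdm1 : tdm1 = Matrix.fromRows
      ((1 : Matrix (Fin n) (Fin n) F2) ⊗ₖ δᵀ)
      (δ ⊗ₖ (1 : Matrix (Fin (n - k)) (Fin (n - k)) F2)))
    (td0 : Matrix (C1 n k) (C0 n k) F2)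
    (htd0 : td0 = Matrix.fromCols
      (δ ⊗ₖ (1 : Matrix (Fin n) (Fin n) F2))
      ((1 : Matrix (Fin (n - k)) (Fin (n - k)) F2) ⊗ₖ δᵀ))
    (bdm1 : Matrix ((Cm1 n k × Cm1 n k) ⊕ ((C0 n k × C0 n k) ⊕ (C1 n k × C1 n k)))
      ((Cm1 n k × C0 n k) ⊕ (C0 n k × C1 n k)) F2)
    (hbdm1 : bdm1 = Matrix.fromBlocks
      ((1 : Matrix (Cm1 n k) (Cm1 n k) F2) ⊗ₖ tdm1ᵀ)
      0
      (Matrix.fromRows (tdm1 ⊗ₖ (1 : Matrix (C0 n k) (C0 n k) F2)) 0)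
      (Matrix.fromRows ((1 : Matrix (C0 n k) (C0 n k) F2) ⊗ₖ td0ᵀ)
        (td0 ⊗ₖ (1 : Matrix (C1 n k) (C1 n k) F2))))
    (bd0 : Matrix ((C0 n k × Cm1 n k) ⊕ (C1 n k × C0 n k))
      ((Cm1 n k × Cm1 n k) ⊕ ((C0 n k × C0 n k) ⊕ (C1 n k × C1 n k))) F2)
    (hbd0 : bd0 = Matrix.fromBlocks
      (tdm1 ⊗ₖ (1 : Matrix (Cm1 n k) (Cm1 n k) F2))
      (Matrix.fromCols ((1 : Matrix (C0 n k) (C0 n k) F2) ⊗ₖ tdm1ᵀ) 0)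
      0
      (Matrix.fromCols (td0 ⊗ₖ (1 : Matrix (C0 n k) (C0 n k) F2))
        ((1 : Matrix (C1 n k) (C1 n k) F2) ⊗ₖ td0ᵀ)))
    (bd1 : Matrix (C1 n k × Cm1 n k) ((C0 n k × Cm1 n k) ⊕ (C1 n k × C0 n k)) F2)
    (hbd1 : bd1 = Matrix.fromCols
      (td0 ⊗ₖ (1 : Matrix (Cm1 n k) (Cm1 n k) F2))
      ((1 : Matrix (C1 n k) (C1 n k) F2) ⊗ₖ tdm1ᵀ)) :
    -- number of physical qubits
    Fintype.card ((Cm1 n k × Cm1 n k) ⊕ ((C0 n k × C0 n k) ⊕ (C1 n k × C1 n k)))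
      = n^4 + 4 * n^2 * (n - k)^2 + (n - k)^4 ∧
    -- number of logical qubits
    (nullity bd0 : ℤ) - (bdm1.rank : ℤ) = (k : ℤ)^4 ∧
    -- infinite single-shot distance
    nullity bd1 = bd0.rank ∧
    (∀ s, bd1.mulVec s = 0 → ∃ r, bd0.mulVec r = s) := by
  have hbdm1 : bdm1 = DoubleProduct.dNeg1 tdm1 td0 := hbdm1
  have hbd0 : bd0 = DoubleProduct.d0 tdm1 td0 := hbd0
  have hbd1 : bd1 = DoubleProduct.d1 tdm1 td0 := hbd1
  have htdm1 : tdm1 = HypergraphProduct.dNeg1 δ := htdm1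
  have htd0 : td0 = HypergraphProduct.d0 δ := htd0
  subst hbdm1 hbd0 hbd1 htdm1 htd0
  obtain ⟨ε, hε⟩ := exists_mul_eq_one_of_rank_eq_card_height (by rwa [Fintype.card_fin])
  obtain ⟨G, hGA⟩ := HypergraphProduct.exists_mul_dNeg1_eq_one δ hε
  obtain ⟨H, hBH⟩ := HypergraphProduct.exists_d0_mul_eq_one δ hε
  have hBA := HypergraphProduct.d0_mul_dNeg1 δ
  have hexact := DoubleProduct.ker_d1_eq_range_d0 hBA hGA hBH
  refine ⟨?_, ?_, nullity_eq_rank_of_ker_eq_range hexact, fun s hs => hexact.le hs⟩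
  · simp only [Fintype.card_sum, Fintype.card_prod, Fintype.card_fin]
    ring
  · rw [DoubleProduct.nullity_d0_sub_rank_dNeg1 hBA hGA hBH]
    simp only [Fintype.card_sum, Fintype.card_prod, Fintype.card_fin]
    push_cast [Nat.cast_sub hk]
    ring
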